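/- arXiv:2307.06328 — 5 statements merged into one kernel-verified Lean document; each statement's English description precedes it below -/
import Mathlib

section
/- Let S and A be finite nonempty sets, B ∈ ℕ, γ ∈ [0,1), μ : S → probability distributions on A, r : S × A → ℝ bounded, and P : S × A → probability distributions on S. Define for Q : S × Fin(B+1) × A → ℝ the value V_Q(s', b) := max( max_{a'} Q(s', b-1, a'), E_{a'∼μ(s')}[Q(s', b, a')] ) when b > 0, and V_Q(s', 0) := E_{a'∼μ(s')}[Q(s', 0, a')]. Then the counterfactual-budgeting Bellman operator T Q(s, b, a) := r(s,a) + γ E_{s'∼P(s,a)}[V_Q(s', b)] satisfies ‖T Q₁ - T Q₂‖_∞ ≤ γ ‖Q₁ - Q₂‖_∞ for all Q₁, Q₂. -/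
open Finset

/-- Expectation of `f` under a (finitely supported) distribution `p` on a finite type. -/
noncomputable def expct {A : Type*} [Fintype A] (p : A → ℝ) (f : A → ℝ) : ℝ :=
  ∑ a, p a * f a

/-- Maximum of a real-valued function on a finite nonempty type. -/
noncomputable def amax {A : Type*} [Fintype A] [Nonempty A] (f : A → ℝ) : ℝ :=
  Finset.univ.sup' Finset.univ_nonempty f

/-- The counterfactual-budgeting value `V_Q(s, b)`. -/
noncomputable def VQ {S A : Type*} [Fintype A] [Nonempty A] {B : ℕ}
    (μ : S → A → ℝ) (Q : S → Fin (B + 1) → A → ℝ) (s : S) (b : Fin (B + 1)) : ℝ :=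
  if _ : (b : ℕ) = 0 then expct (μ s) (Q s b)
  else max (amax (Q s ⟨(b : ℕ) - 1, lt_of_le_of_lt (Nat.sub_le _ _) b.isLt⟩))
           (expct (μ s) (Q s b))

/-- The counterfactual-budgeting Bellman operator `T`. -/
noncomputable def TCB {S A : Type*} [Fintype S] [Fintype A] [Nonempty A] {B : ℕ}
    (γ : ℝ) (r : S → A → ℝ) (P : S → A → S → ℝ) (μ : S → A → ℝ)
    (Q : S → Fin (B + 1) → A → ℝ) : S → Fin (B + 1) → A → ℝ :=
  fun s b a => r s a + γ * ∑ s', P s a s' * VQ μ Q s' b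

/-- Sup norm over state-budget-action triples. -/
noncomputable def supNorm3 {S A : Type*} [Fintype S] [Nonempty S] [Fintype A] [Nonempty A]
    {B : ℕ} (Q : S → Fin (B + 1) → A → ℝ) : ℝ :=
  Finset.univ.sup' Finset.univ_nonempty
    (fun x : S × Fin (B + 1) × A => |Q x.1 x.2.1 x.2.2|)

/-- Sup norm over state-budget pairs. -/
noncomputable def supNorm2 {S : Type*} [Fintype S] [Nonempty S]
    {B : ℕ} (V : S → Fin (B + 1) → ℝ) : ℝ :=
  Finset.univ.sup' Finset.univ_nonempty (fun x : S × Fin (B + 1) => |V x.1 x.2|)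

/-- Sup norm over state-action pairs. -/
noncomputable def supNormSA {S A : Type*} [Fintype S] [Nonempty S] [Fintype A] [Nonempty A]
    (Q : S → A → ℝ) : ℝ :=
  Finset.univ.sup' Finset.univ_nonempty (fun x : S × A => |Q x.1 x.2|)

/-
Each ingredient of `V_Q` is 1-Lipschitz for the sup norm: an expectation under a probability
vector averages the pointwise differences, a maximum moves by at most the largest pointwise
difference, and so does a maximum of two such quantities. Taking the `P`-expectation over next
states keeps this bound, and multiplying by `γ` gives the contraction; the reward cancels.
-/

lemma abs_expct_sub_expct_le {A : Type*} [Fintype A] {p f g : A → ℝ} (hp0 : ∀ a, 0 ≤ p a)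
    (hp1 : ∑ a, p a = 1) {M : ℝ} (h : ∀ a, |f a - g a| ≤ M) :
    |expct p f - expct p g| ≤ M := by
  calc |expct p f - expct p g| = |∑ a, p a * (f a - g a)| := by
        simp only [expct, mul_sub, sum_sub_distrib]
    _ ≤ ∑ a, |p a * (f a - g a)| := abs_sum_le_sum_abs _ _
    _ ≤ ∑ a, p a * M := by
        gcongr with a
        rw [abs_mul, abs_of_nonneg (hp0 a)]
        exact mul_le_mul_of_nonneg_left (h a) (hp0 a)
    _ = M := by rw [← sum_mul, hp1, one_mul]

lemma amax_le_amax_add {A : Type*} [Fintype A] [Nonempty A] {f g : A → ℝ} {M : ℝ}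
    (h : ∀ a, f a ≤ g a + M) : amax f ≤ amax g + M :=
  sup'_le _ _ fun a _ => (h a).trans (by gcongr; exact le_sup' g (mem_univ a))

lemma abs_amax_sub_amax_le {A : Type*} [Fintype A] [Nonempty A] {f g : A → ℝ} {M : ℝ}
    (h : ∀ a, |f a - g a| ≤ M) : |amax f - amax g| ≤ M := by
  have h' a := abs_sub_le_iff.1 (h a)
  refine abs_sub_le_iff.2 ⟨?_, ?_⟩ <;>
    refine sub_le_iff_le_add'.2 (amax_le_amax_add fun a => ?_)
  exacts [sub_le_iff_le_add'.1 (h' a).1, sub_le_iff_le_add'.1 (h' a).2]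

lemma abs_le_supNorm3 {S A : Type*} [Fintype S] [Nonempty S] [Fintype A] [Nonempty A] {B : ℕ}
    (Q : S → Fin (B + 1) → A → ℝ) (s : S) (b : Fin (B + 1)) (a : A) :
    |Q s b a| ≤ supNorm3 Q :=
  le_sup' (fun x : S × Fin (B + 1) × A => |Q x.1 x.2.1 x.2.2|) (mem_univ (s, b, a))

lemma abs_VQ_sub_VQ_le {S A : Type*} [Fintype S] [Nonempty S] [Fintype A] [Nonempty A] {B : ℕ}
    {μ : S → A → ℝ} (hμ0 : ∀ s a, 0 ≤ μ s a) (hμ1 : ∀ s, ∑ a, μ s a = 1)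
    (Q₁ Q₂ : S → Fin (B + 1) → A → ℝ) (s : S) (b : Fin (B + 1)) :
    |VQ μ Q₁ s b - VQ μ Q₂ s b| ≤ supNorm3 (fun s b a => Q₁ s b a - Q₂ s b a) := by
  have hQ := abs_le_supNorm3 (fun s b a => Q₁ s b a - Q₂ s b a) s
  unfold VQ
  split
  · exact abs_expct_sub_expct_le (hμ0 s) (hμ1 s) (hQ b)
  · exact (abs_max_sub_max_le_max _ _ _ _).trans <|
      max_le (abs_amax_sub_amax_le (hQ _)) (abs_expct_sub_expct_le (hμ0 s) (hμ1 s) (hQ b))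

theorem TCB_contraction_general {S A : Type*} [Fintype S] [Nonempty S] [Fintype A] [Nonempty A] {B : ℕ}
    (γ : ℝ) (hγ0 : 0 ≤ γ)
    (r : S → A → ℝ)
    (P : S → A → S → ℝ) (hP0 : ∀ s a s', 0 ≤ P s a s') (hP1 : ∀ s a, ∑ s', P s a s' = 1)
    (μ : S → A → ℝ) (hμ0 : ∀ s a, 0 ≤ μ s a) (hμ1 : ∀ s, ∑ a, μ s a = 1)
    (Q₁ Q₂ : S → Fin (B + 1) → A → ℝ) :
    supNorm3 (fun s b a => TCB γ r P μ Q₁ s b a - TCB γ r P μ Q₂ s b a)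
      ≤ γ * supNorm3 (fun s b a => Q₁ s b a - Q₂ s b a) := by
  refine sup'_le _ _ fun ⟨s, b, a⟩ _ => ?_
  have hV : |expct (P s a) (VQ μ Q₁ · b) - expct (P s a) (VQ μ Q₂ · b)|
      ≤ supNorm3 (fun s b a => Q₁ s b a - Q₂ s b a) :=
    abs_expct_sub_expct_le (hP0 s a) (hP1 s a) fun s' => abs_VQ_sub_VQ_le hμ0 hμ1 Q₁ Q₂ s' b
  calc |TCB γ r P μ Q₁ s b a - TCB γ r P μ Q₂ s b a|
      = γ * |expct (P s a) (VQ μ Q₁ · b) - expct (P s a) (VQ μ Q₂ · b)| := by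
        simp only [TCB, expct, add_sub_add_left_eq_sub, ← mul_sub, abs_mul, abs_of_nonneg hγ0]
    _ ≤ γ * supNorm3 (fun s b a => Q₁ s b a - Q₂ s b a) := by gcongr

theorem TCB_contraction {S A : Type*} [Fintype S] [Nonempty S] [Fintype A] [Nonempty A] {B : ℕ}
    (γ : ℝ) (hγ0 : 0 ≤ γ) (hγ1 : γ < 1)
    (r : S → A → ℝ)
    (P : S → A → S → ℝ) (hP0 : ∀ s a s', 0 ≤ P s a s') (hP1 : ∀ s a, ∑ s', P s a s' = 1)
    (μ : S → A → ℝ) (hμ0 : ∀ s a, 0 ≤ μ s a) (hμ1 : ∀ s, ∑ a, μ s a = 1)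
    (Q₁ Q₂ : S → Fin (B + 1) → A → ℝ) :
    supNorm3 (fun s b a => TCB γ r P μ Q₁ s b a - TCB γ r P μ Q₂ s b a)
      ≤ γ * supNorm3 (fun s b a => Q₁ s b a - Q₂ s b a) :=
  TCB_contraction_general γ hγ0 r P hP0 hP1 μ hμ0 hμ1 Q₁ Q₂
end

section
/- Any fixed point Q of the counterfactual-budgeting Bellman operator is monotone in the budget: for all states s, actions a, and budgets b > b' (with b, b' ∈ {0, ..., B}), Q(s, b, a) ≥ Q(s, b', a). -/
open Finset

/-!
Let `D` be the largest one-step budget gap `Q(s, b, a) - Q(s, b + 1, a)`. Expectations and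
maxima never enlarge a uniform bound on differences, so the gaps of `V_Q` are at most `D` as
well (the option `max_{a'} Q(s', b - 1, a')` available at budget `b` is matched by
`max_{a'} Q(s', b, a')` at budget `b + 1`), and the gaps of `T Q` are at most `γ D`. For a fixed
point this gives `D ≤ γ D`, hence `D ≤ 0` since `γ < 1`.
-/

lemma expct_sub_expct_le {A : Type*} [Fintype A] {p : A → ℝ} (hp0 : ∀ a, 0 ≤ p a)
    (hp1 : ∑ a, p a = 1) {f g : A → ℝ} {D : ℝ} (h : ∀ a, f a - g a ≤ D) :
    expct p f - expct p g ≤ D :=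
  calc expct p f - expct p g = ∑ a, p a * (f a - g a) := by
        simp only [expct, mul_sub, Finset.sum_sub_distrib]
    _ ≤ ∑ a, p a * D := Finset.sum_le_sum fun a _ => mul_le_mul_of_nonneg_left (h a) (hp0 a)
    _ = D := by rw [← Finset.sum_mul, hp1, one_mul]

lemma amax_sub_amax_le {A : Type*} [Fintype A] [Nonempty A] {f g : A → ℝ} {D : ℝ}
    (h : ∀ a, f a - g a ≤ D) : amax f - amax g ≤ D := by
  rw [sub_le_iff_le_add]
  refine Finset.sup'_le _ _ fun a _ => ?_
  have hga : g a ≤ amax g := Finset.le_sup' g (Finset.mem_univ a)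
  linarith [h a]

lemma forall_nonpos_of_forall_le_imp_le_mul {ι : Type*} [Finite ι] {γ : ℝ} (hγ : γ < 1)
    {g : ι → ℝ} (h : ∀ D, (∀ i, g i ≤ D) → ∀ i, g i ≤ γ * D) (i : ι) : g i ≤ 0 := by
  have : Nonempty ι := ⟨i⟩
  obtain ⟨i₀, hi₀⟩ := Finite.exists_max g
  have hcontract : g i₀ ≤ γ * g i₀ := h (g i₀) hi₀ i₀
  have hmax_nonpos : g i₀ ≤ 0 := by nlinarith
  exact (hi₀ i).trans hmax_nonpos

section Budget

variable {S A : Type*} [Fintype A] [Nonempty A] {B : ℕ}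

lemma VQ_zero (μ : S → A → ℝ) (Q : S → Fin (B + 1) → A → ℝ) (s : S) :
    VQ μ Q s 0 = expct (μ s) (Q s 0) :=
  dif_pos rfl

lemma VQ_succ (μ : S → A → ℝ) (Q : S → Fin (B + 1) → A → ℝ) (s : S) (j : Fin B) :
    VQ μ Q s j.succ = max (amax (Q s j.castSucc)) (expct (μ s) (Q s j.succ)) := by
  rw [VQ, dif_neg (by simp)]
  rfl

lemma VQ_castSucc_sub_VQ_succ_le {μ : S → A → ℝ} (hμ0 : ∀ s a, 0 ≤ μ s a)
    (hμ1 : ∀ s, ∑ a, μ s a = 1) {Q : S → Fin (B + 1) → A → ℝ} {s : S} {D : ℝ}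
    (hgap : ∀ j : Fin B, ∀ a, Q s j.castSucc a - Q s j.succ a ≤ D) (j : Fin B) :
    VQ μ Q s j.castSucc - VQ μ Q s j.succ ≤ D := by
  have hexpct := expct_sub_expct_le (hμ0 s) (hμ1 s) (hgap j)
  rw [VQ_succ]
  obtain h0 | ⟨i, hi⟩ := j.castSucc.eq_zero_or_eq_succ
  · rw [h0] at hexpct ⊢
    rw [VQ_zero]
    linarith [le_max_right (amax (Q s 0)) (expct (μ s) (Q s j.succ))]
  · have hamax : amax (Q s i.castSucc) - amax (Q s j.castSucc) ≤ D :=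
      amax_sub_amax_le (hi ▸ hgap i)
    rw [hi, VQ_succ, ← hi]
    exact (max_sub_max_le_max _ _ _ _).trans (max_le hamax hexpct)

variable [Fintype S] {γ : ℝ} {r : S → A → ℝ} {P : S → A → S → ℝ} {μ : S → A → ℝ}

lemma TCB_castSucc_sub_TCB_succ_le (hγ0 : 0 ≤ γ) (hP0 : ∀ s a s', 0 ≤ P s a s')
    (hP1 : ∀ s a, ∑ s', P s a s' = 1) (hμ0 : ∀ s a, 0 ≤ μ s a) (hμ1 : ∀ s, ∑ a, μ s a = 1)
    {Q : S → Fin (B + 1) → A → ℝ} {D : ℝ}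
    (hgap : ∀ s, ∀ j : Fin B, ∀ a, Q s j.castSucc a - Q s j.succ a ≤ D)
    (s : S) (j : Fin B) (a : A) :
    TCB γ r P μ Q s j.castSucc a - TCB γ r P μ Q s j.succ a ≤ γ * D := by
  have hV : expct (P s a) (fun s' => VQ μ Q s' j.castSucc)
      - expct (P s a) (fun s' => VQ μ Q s' j.succ) ≤ D :=
    expct_sub_expct_le (hP0 s a) (hP1 s a) fun s' =>
      VQ_castSucc_sub_VQ_succ_le hμ0 hμ1 (hgap s') j
  calc TCB γ r P μ Q s j.castSucc a - TCB γ r P μ Q s j.succ a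
      = γ * (expct (P s a) (fun s' => VQ μ Q s' j.castSucc)
          - expct (P s a) (fun s' => VQ μ Q s' j.succ)) := by
        simp only [TCB, expct]
        ring
    _ ≤ γ * D := mul_le_mul_of_nonneg_left hV hγ0

lemma TCB_fixedPoint_monotone (hγ0 : 0 ≤ γ) (hγ1 : γ < 1) (hP0 : ∀ s a s', 0 ≤ P s a s')
    (hP1 : ∀ s a, ∑ s', P s a s' = 1) (hμ0 : ∀ s a, 0 ≤ μ s a) (hμ1 : ∀ s, ∑ a, μ s a = 1)
    {Q : S → Fin (B + 1) → A → ℝ} (hQ : TCB γ r P μ Q = Q) (s : S) (a : A) :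
    Monotone fun b => Q s b a := by
  have hgap : ∀ x : S × Fin B × A, Q x.1 x.2.1.castSucc x.2.2 - Q x.1 x.2.1.succ x.2.2 ≤ 0 :=
    forall_nonpos_of_forall_le_imp_le_mul hγ1 fun D hD ⟨s, j, a⟩ => by
      rw [← hQ]
      exact TCB_castSucc_sub_TCB_succ_le hγ0 hP0 hP1 hμ0 hμ1
        (fun s j a => hD (s, j, a)) s j a
  exact Fin.monotone_iff_le_succ.2 fun j => sub_nonpos.1 (hgap (s, j, a))

end Budget

theorem fixedPoint_budget_monotone_general {S A : Type*} [Fintype S] [Fintype A] [Nonempty A] {B : ℕ}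
    (γ : ℝ) (hγ0 : 0 ≤ γ) (hγ1 : γ < 1)
    (r : S → A → ℝ)
    (P : S → A → S → ℝ) (hP0 : ∀ s a s', 0 ≤ P s a s') (hP1 : ∀ s a, ∑ s', P s a s' = 1)
    (μ : S → A → ℝ) (hμ0 : ∀ s a, 0 ≤ μ s a) (hμ1 : ∀ s, ∑ a, μ s a = 1)
    (Q : S → Fin (B + 1) → A → ℝ) (hQ : TCB γ r P μ Q = Q)
    (s : S) (a : A) (b b' : Fin (B + 1)) (hbb : b' < b) :
    Q s b' a ≤ Q s b a :=
  TCB_fixedPoint_monotone hγ0 hγ1 hP0 hP1 hμ0 hμ1 hQ s a hbb.le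

theorem fixedPoint_budget_monotone {S A : Type*} [Fintype S] [Nonempty S] [Fintype A] [Nonempty A] {B : ℕ}
    (γ : ℝ) (hγ0 : 0 ≤ γ) (hγ1 : γ < 1)
    (r : S → A → ℝ)
    (P : S → A → S → ℝ) (hP0 : ∀ s a s', 0 ≤ P s a s') (hP1 : ∀ s a, ∑ s', P s a s' = 1)
    (μ : S → A → ℝ) (hμ0 : ∀ s a, 0 ≤ μ s a) (hμ1 : ∀ s, ∑ a, μ s a = 1)
    (Q : S → Fin (B + 1) → A → ℝ) (hQ : TCB γ r P μ Q = Q)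
    (s : S) (a : A) (b b' : Fin (B + 1)) (hbb : b' < b) :
    Q s b' a ≤ Q s b a :=
  fixedPoint_budget_monotone_general γ hγ0 hγ1 r P hP0 hP1 μ hμ0 hμ1 Q hQ s a b b' hbb
end

section
/- If Q : S × {0,...,B} × A → ℝ is nondecreasing in the budget argument (Q(s,b,a) ≤ Q(s,b+1,a) for all s, a, and b < B), then T Q is also nondecreasing in the budget argument, where T is the counterfactual-budgeting Bellman operator. -/
open Finset

/-!
`T Q (s, ·, a)` is a nonnegative combination of the values `V_Q(s', ·)`, so it suffices that
`V_Q(s', b) ≤ V_Q(s', b + 1)`. For `b > 0` both arguments of the max defining `V_Q` move up one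
budget level, and monotonicity of `Q` applies to each; at `b = 0`, `V_Q(s', 0)` is a bare
expectation, bounded by the second argument of the max at budget `1`.
-/

lemma expct_mono {A : Type*} [Fintype A] {p : A → ℝ} (hp : ∀ a, 0 ≤ p a)
    {f g : A → ℝ} (h : ∀ a, f a ≤ g a) : expct p f ≤ expct p g :=
  Finset.sum_le_sum fun a _ => mul_le_mul_of_nonneg_left (h a) (hp a)

lemma amax_mono {A : Type*} [Fintype A] [Nonempty A] {f g : A → ℝ}
    (h : ∀ a, f a ≤ g a) : amax f ≤ amax g :=
  Finset.sup'_mono_fun fun a _ => h a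

lemma VQ_le_VQ_succ {S A : Type*} [Fintype A] [Nonempty A] {B : ℕ}
    {μ : S → A → ℝ} (hμ0 : ∀ s a, 0 ≤ μ s a) {Q : S → Fin (B + 1) → A → ℝ}
    (hmono : ∀ (s : S) (a : A) (b : Fin (B + 1)) (h : (b : ℕ) < B),
      Q s b a ≤ Q s ⟨(b : ℕ) + 1, Nat.succ_lt_succ h⟩ a)
    (s : S) (b : Fin (B + 1)) (h : (b : ℕ) < B) :
    VQ μ Q s b ≤ VQ μ Q s ⟨(b : ℕ) + 1, Nat.succ_lt_succ h⟩ := by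
  have hexp : expct (μ s) (Q s b) ≤ expct (μ s) (Q s ⟨(b : ℕ) + 1, Nat.succ_lt_succ h⟩) :=
    expct_mono (hμ0 s) fun a => hmono s a b h
  unfold VQ
  rw [dif_neg (Nat.succ_ne_zero _)]
  split_ifs with hb
  · exact hexp.trans (le_max_right _ _)
  · refine max_le_max (amax_mono fun a => ?_) hexp
    have hb' : (⟨(b : ℕ) - 1 + 1, by omega⟩ : Fin (B + 1)) = b :=
      Fin.ext (Nat.sub_add_cancel (Nat.pos_of_ne_zero hb))
    simpa only [hb', Nat.add_sub_cancel] using hmono s a ⟨(b : ℕ) - 1, by omega⟩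
      (Nat.lt_of_le_of_lt (Nat.sub_le _ _) h)

lemma TCB_le_TCB_of_VQ_le {S A : Type*} [Fintype S] [Fintype A] [Nonempty A] {B : ℕ}
    {γ : ℝ} (hγ0 : 0 ≤ γ) (r : S → A → ℝ) {P : S → A → S → ℝ} (hP0 : ∀ s a s', 0 ≤ P s a s')
    (μ : S → A → ℝ) (Q : S → Fin (B + 1) → A → ℝ) {b b' : Fin (B + 1)}
    (hV : ∀ s', VQ μ Q s' b ≤ VQ μ Q s' b') (s : S) (a : A) :
    TCB γ r P μ Q s b a ≤ TCB γ r P μ Q s b' a :=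
  add_le_add_right (mul_le_mul_of_nonneg_left
    (Finset.sum_le_sum fun s' _ => mul_le_mul_of_nonneg_left (hV s') (hP0 s a s')) hγ0) _

theorem TCB_preserves_budget_monotone {S A : Type*} [Fintype S] [Fintype A] [Nonempty A] {B : ℕ}
    (γ : ℝ) (hγ0 : 0 ≤ γ)
    (r : S → A → ℝ)
    (P : S → A → S → ℝ) (hP0 : ∀ s a s', 0 ≤ P s a s')
    (μ : S → A → ℝ) (hμ0 : ∀ s a, 0 ≤ μ s a)
    (Q : S → Fin (B + 1) → A → ℝ)
    (hmono : ∀ (s : S) (a : A) (b : Fin (B + 1)) (h : (b : ℕ) < B),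
      Q s b a ≤ Q s ⟨(b : ℕ) + 1, by omega⟩ a)
    (s : S) (a : A) (b : Fin (B + 1)) (h : (b : ℕ) < B) :
    TCB γ r P μ Q s b a ≤ TCB γ r P μ Q s ⟨(b : ℕ) + 1, by omega⟩ a :=
  TCB_le_TCB_of_VQ_le hγ0 r hP0 μ Q (fun s' => VQ_le_VQ_succ hμ0 hmono s' b h) s a
end

section
/- At budget 0, the fixed point Q* of the counterfactual-budgeting Bellman operator equals the behavior policy's action-value function: Q*(s, 0, a) = Q^μ(s, a) for all s, a, where Q^μ is the unique solution of Q^μ(s,a) = r(s,a) + γ E_{s'∼P(s,a)} E_{a'∼μ(s')}[Q^μ(s', a')]. -/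
open Finset

/-!
Only budget `0` matters: there `V_Q(s, 0)` is the `μ`-average of `Q(s, 0, ·)` and never refers to
other budgets, so `Q*(·, 0, ·)` is a fixed point of the evaluation operator of `μ`. That operator is
a `γ`-contraction in the sup norm, because stochastic averaging does not increase the sup norm, and
`Q^μ` is its unique fixed point.
-/

lemma abs_sum_mul_le_norm {ι : Type*} [Fintype ι] {w : ι → ℝ} (hw0 : ∀ i, 0 ≤ w i)
    (hw1 : ∑ i, w i = 1) (f : ι → ℝ) : |∑ i, w i * f i| ≤ ‖f‖ :=
  calc |∑ i, w i * f i| ≤ ∑ i, w i * ‖f‖ := by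
        refine (abs_sum_le_sum_abs _ _).trans (sum_le_sum fun i _ => ?_)
        rw [abs_mul, abs_of_nonneg (hw0 i), ← Real.norm_eq_abs]
        exact mul_le_mul_of_nonneg_left (norm_le_pi_norm f i) (hw0 i)
    _ = ‖f‖ := by rw [← sum_mul, hw1, one_mul]

lemma expct_sub {A : Type*} [Fintype A] (p f g : A → ℝ) :
    expct p (f - g) = expct p f - expct p g := by
  simp only [expct, Pi.sub_apply, mul_sub, sum_sub_distrib]

noncomputable def bellmanEval {S A : Type*} [Fintype S] [Fintype A] (γ : ℝ) (r : S → A → ℝ)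
    (P : S → A → S → ℝ) (μ : S → A → ℝ) (Q : S → A → ℝ) : S → A → ℝ :=
  fun s a => r s a + γ * ∑ s', P s a s' * expct (μ s') (Q s')

section BellmanEval

variable {S A : Type*} [Fintype S] [Fintype A] {γ : ℝ} {P : S → A → S → ℝ} {μ : S → A → ℝ}

lemma bellmanEval_sub (r : S → A → ℝ) (Q₁ Q₂ : S → A → ℝ) :
    bellmanEval γ r P μ Q₁ - bellmanEval γ r P μ Q₂ =
      fun s a => γ * ∑ s', P s a s' * expct (μ s') ((Q₁ - Q₂) s') := by
  ext s a
  simp only [bellmanEval, Pi.sub_apply, expct_sub, mul_sub, sum_sub_distrib]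
  ring

lemma norm_bellmanEval_sub_le (hγ0 : 0 ≤ γ) (hP0 : ∀ s a s', 0 ≤ P s a s')
    (hP1 : ∀ s a, ∑ s', P s a s' = 1) (hμ0 : ∀ s a, 0 ≤ μ s a) (hμ1 : ∀ s, ∑ a, μ s a = 1)
    (r : S → A → ℝ) (Q₁ Q₂ : S → A → ℝ) :
    ‖bellmanEval γ r P μ Q₁ - bellmanEval γ r P μ Q₂‖ ≤ γ * ‖Q₁ - Q₂‖ := by
  have hexpct : ‖fun s' => expct (μ s') ((Q₁ - Q₂) s')‖ ≤ ‖Q₁ - Q₂‖ :=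
    (pi_norm_le_iff_of_nonneg (norm_nonneg _)).2 fun s' =>
      (abs_sum_mul_le_norm (hμ0 s') (hμ1 s') _).trans (norm_le_pi_norm _ s')
  rw [bellmanEval_sub]
  refine (pi_norm_le_iff_of_nonneg (by positivity)).2 fun s =>
    (pi_norm_le_iff_of_nonneg (by positivity)).2 fun a => ?_
  rw [Real.norm_eq_abs, abs_mul, abs_of_nonneg hγ0]
  exact mul_le_mul_of_nonneg_left ((abs_sum_mul_le_norm (hP0 s a) (hP1 s a) _).trans hexpct) hγ0

lemma contractingWith_bellmanEval (hγ0 : 0 ≤ γ) (hγ1 : γ < 1) (hP0 : ∀ s a s', 0 ≤ P s a s')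
    (hP1 : ∀ s a, ∑ s', P s a s' = 1) (hμ0 : ∀ s a, 0 ≤ μ s a) (hμ1 : ∀ s, ∑ a, μ s a = 1)
    (r : S → A → ℝ) : ContractingWith γ.toNNReal (bellmanEval γ r P μ) := by
  refine ⟨Real.toNNReal_lt_one.2 hγ1, LipschitzWith.of_dist_le_mul fun Q₁ Q₂ => ?_⟩
  rw [Real.coe_toNNReal _ hγ0, dist_eq_norm, dist_eq_norm]
  exact norm_bellmanEval_sub_le hγ0 hP0 hP1 hμ0 hμ1 r Q₁ Q₂

lemma bellmanEval_budget_zero [Nonempty A] {B : ℕ} (r : S → A → ℝ) (Q : S → Fin (B + 1) → A → ℝ) :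
    bellmanEval γ r P μ (fun s => Q s 0) = fun s => TCB γ r P μ Q s 0 := by
  ext s a
  simp [bellmanEval, TCB, VQ]

end BellmanEval

theorem fixedPoint_budget_zero_eq_Qmu_general {S A : Type*} [Fintype S] [Fintype A] [Nonempty A] {B : ℕ}
    (γ : ℝ) (hγ0 : 0 ≤ γ) (hγ1 : γ < 1)
    (r : S → A → ℝ)
    (P : S → A → S → ℝ) (hP0 : ∀ s a s', 0 ≤ P s a s') (hP1 : ∀ s a, ∑ s', P s a s' = 1)
    (μ : S → A → ℝ) (hμ0 : ∀ s a, 0 ≤ μ s a) (hμ1 : ∀ s, ∑ a, μ s a = 1)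
    (Qst : S → Fin (B + 1) → A → ℝ) (hQst : TCB γ r P μ Qst = Qst)
    (Qmu : S → A → ℝ)
    (hQmu : ∀ s a, Qmu s a = r s a + γ * ∑ s', P s a s' * expct (μ s') (Qmu s')) :
    ∀ s a, Qst s (0 : Fin (B + 1)) a = Qmu s a := by
  have hQst0 : Function.IsFixedPt (bellmanEval γ r P μ) (fun s => Qst s 0) := by
    rw [Function.IsFixedPt, bellmanEval_budget_zero, hQst]
  have hQmu' : Function.IsFixedPt (bellmanEval γ r P μ) Qmu :=
    funext₂ fun s a => (hQmu s a).symm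
  exact congrFun₂ ((contractingWith_bellmanEval hγ0 hγ1 hP0 hP1 hμ0 hμ1 r).fixedPoint_unique'
    hQst0 hQmu')

theorem fixedPoint_budget_zero_eq_Qmu {S A : Type*} [Fintype S] [Nonempty S] [Fintype A] [Nonempty A] {B : ℕ}
    (γ : ℝ) (hγ0 : 0 ≤ γ) (hγ1 : γ < 1)
    (r : S → A → ℝ)
    (P : S → A → S → ℝ) (hP0 : ∀ s a s', 0 ≤ P s a s') (hP1 : ∀ s a, ∑ s', P s a s' = 1)
    (μ : S → A → ℝ) (hμ0 : ∀ s a, 0 ≤ μ s a) (hμ1 : ∀ s, ∑ a, μ s a = 1)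
    (Qst : S → Fin (B + 1) → A → ℝ) (hQst : TCB γ r P μ Qst = Qst)
    (Qmu : S → A → ℝ)
    (hQmu : ∀ s a, Qmu s a = r s a + γ * ∑ s', P s a s' * expct (μ s') (Qmu s')) :
    ∀ s a, Qst s (0 : Fin (B + 1)) a = Qmu s a :=
  fixedPoint_budget_zero_eq_Qmu_general γ hγ0 hγ1 r P hP0 hP1 μ hμ0 hμ1 Qst hQst Qmu hQmu
end

section
/- For the fixed point Q* of the counterfactual-budgeting Bellman operator with budget bound B, the value at maximal budget is at most the unconstrained optimal Q-value: Q*(s, B, a) ≤ Q^⋆(s, a) for all s, a, where Q^⋆ is the fixed point of the standard optimal Bellman operator T^⋆ Q(s,a) = r(s,a) + γ E_{s'}[max_{a'} Q(s', a')]. -/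
open Finset

/-! The largest gap `D = max (Q* - Q^⋆)` is attained at some triple `(s, b, a)`. Every budgeted
value `V_{Q*}(s', b)`, being an average or a maximum of entries of `Q*`, is at most
`max_{a'} Q^⋆(s', a') + D`; unfolding both Bellman equations at the maximizing triple then gives
`D ≤ γ D`, hence `D ≤ 0`. -/

section Expectation

variable {A : Type*} [Fintype A] {p : A → ℝ}

theorem expct_le_expct_add (hp0 : ∀ a, 0 ≤ p a) (hp1 : ∑ a, p a = 1) {f g : A → ℝ} {c : ℝ}
    (h : ∀ a, f a ≤ g a + c) : expct p f ≤ expct p g + c :=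
  calc expct p f ≤ ∑ a, p a * (g a + c) :=
        sum_le_sum fun a _ => mul_le_mul_of_nonneg_left (h a) (hp0 a)
    _ = expct p g + c := by simp only [expct, mul_add, sum_add_distrib, ← sum_mul, hp1, one_mul]

theorem expct_le_of_forall_le (hp0 : ∀ a, 0 ≤ p a) (hp1 : ∑ a, p a = 1) {f : A → ℝ} {c : ℝ}
    (h : ∀ a, f a ≤ c) : expct p f ≤ c := by
  simpa [expct] using expct_le_expct_add hp0 hp1 (g := 0) (by simpa using h)

end Expectation

section Maximum

variable {A : Type*} [Fintype A] [Nonempty A]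

theorem le_amax (f : A → ℝ) (a : A) : f a ≤ amax f :=
  le_sup' f (mem_univ a)

theorem amax_le {f : A → ℝ} {c : ℝ} (h : ∀ a, f a ≤ c) : amax f ≤ c :=
  sup'_le _ _ fun a _ => h a

end Maximum

theorem VQ_le_of_le {S A : Type*} [Fintype A] [Nonempty A] {B : ℕ} {μ : S → A → ℝ}
    {Q : S → Fin (B + 1) → A → ℝ} {s : S} (hμ0 : ∀ a, 0 ≤ μ s a) (hμ1 : ∑ a, μ s a = 1)
    {c : ℝ} (h : ∀ b a, Q s b a ≤ c) (b : Fin (B + 1)) : VQ μ Q s b ≤ c := by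
  unfold VQ
  split_ifs
  · exact expct_le_of_forall_le hμ0 hμ1 (h b)
  · exact max_le (amax_le (h _)) (expct_le_of_forall_le hμ0 hμ1 (h b))

theorem fixedPoint_le_optimal {S A : Type*} [Fintype S] [Nonempty S] [Fintype A] [Nonempty A] {B : ℕ}
    (γ : ℝ) (hγ0 : 0 ≤ γ) (hγ1 : γ < 1)
    (r : S → A → ℝ)
    (P : S → A → S → ℝ) (hP0 : ∀ s a s', 0 ≤ P s a s') (hP1 : ∀ s a, ∑ s', P s a s' = 1)
    (μ : S → A → ℝ) (hμ0 : ∀ s a, 0 ≤ μ s a) (hμ1 : ∀ s, ∑ a, μ s a = 1)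
    (Qst : S → Fin (B + 1) → A → ℝ) (hQst : TCB γ r P μ Qst = Qst)
    (Qopt : S → A → ℝ)
    (hQopt : ∀ s a, Qopt s a = r s a + γ * ∑ s', P s a s' * amax (Qopt s')) :
    ∀ s a, Qst s (Fin.last B) a ≤ Qopt s a := by
  obtain ⟨⟨s₀, b₀, a₀⟩, -, hmax⟩ := exists_max_image univ
    (fun x : S × Fin (B + 1) × A => Qst x.1 x.2.1 x.2.2 - Qopt x.1 x.2.2) univ_nonempty
  set D := Qst s₀ b₀ a₀ - Qopt s₀ a₀ with hD
  have hgap : ∀ s b a, Qst s b a ≤ Qopt s a + D := fun s b a => by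
    linarith [hmax (s, b, a) (mem_univ _)]
  have hV : ∀ s' b, VQ μ Qst s' b ≤ amax (Qopt s') + D := fun s' =>
    VQ_le_of_le (hμ0 s') (hμ1 s') fun b a => by linarith [hgap s' b a, le_amax (Qopt s') a]
  have hD_le : D ≤ γ * D := by
    have hbellman : Qst s₀ b₀ a₀ = r s₀ a₀ + γ * expct (P s₀ a₀) (fun s' => VQ μ Qst s' b₀) :=
      (congrFun (congrFun (congrFun hQst s₀) b₀) a₀).symm
    have hexp := expct_le_expct_add (hP0 s₀ a₀) (hP1 s₀ a₀) fun s' => hV s' b₀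
    calc D = γ * (expct (P s₀ a₀) (fun s' => VQ μ Qst s' b₀)
              - expct (P s₀ a₀) (fun s' => amax (Qopt s'))) := by
          rw [hD, hbellman, hQopt s₀ a₀]; unfold expct; ring
      _ ≤ γ * D := mul_le_mul_of_nonneg_left (by linarith) hγ0
  have hD_nonpos : D ≤ 0 := by nlinarith
  intro s a
  linarith [hgap s (Fin.last B) a]
end
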